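/- arXiv:2412.19042 — 6 statements merged into one kernel-verified Lean document; each statement's English description precedes it below -/
import Mathlib

section
/- If a graph G is (t1,t2)-Ramsey (every red/blue edge-coloring of G contains a red K_{t1} or a blue K_{t2}), then G contains at least binom(r(t1,t2), 2) edges, where r(t1,t2) is the Ramsey number. Consequently the size Ramsey number of (K_{t1}, K_{t2}) equals binom(r(t1,t2), 2). -/
open Finset

/-- A graph `G` is `(t₁,t₂)`-Ramsey: every red/blue coloring of its edges (given by a
red subgraph `R ≤ G`, with blue graph `G \ R`) contains a red `K_{t₁}` or a blue `K_{t₂}`. -/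
def IsRamsey {V : Type*} (G : SimpleGraph V) (t1 t2 : ℕ) : Prop :=
  ∀ R : SimpleGraph V, R ≤ G →
    (∃ s : Finset V, R.IsNClique t1 s) ∨ (∃ s : Finset V, (G \ R).IsNClique t2 s)

/-- The number of copies of `K_s` in `G`, i.e. the number of `s`-cliques. -/
noncomputable def cliqueCount {V : Type*} [Fintype V] (G : SimpleGraph V) (s : ℕ) : ℕ := by
  classical exact (G.cliqueFinset s).card

/-- The Ramsey number `r(t₁,t₂)`: the least `n` such that `K_n` is `(t₁,t₂)`-Ramsey. -/
noncomputable def ramseyNumber (t1 t2 : ℕ) : ℕ :=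
  sInf {n | IsRamsey (⊤ : SimpleGraph (Fin n)) t1 t2}

/-- The `K_s`-Ramsey number `r_{K_s}(t₁,t₂)`: the minimum number of copies of `K_s`
in a `(t₁,t₂)`-Ramsey graph. -/
noncomputable def ramseyCliqueNumber (s t1 t2 : ℕ) : ℕ :=
  sInf {N | ∃ (n : ℕ) (G : SimpleGraph (Fin n)), IsRamsey G t1 t2 ∧ cliqueCount G s = N}

/-- The number of independent sets of size `t` in `H`. -/
noncomputable def indepCount {V : Type*} [Fintype V] (H : SimpleGraph V) (t : ℕ) : ℕ :=
  cliqueCount Hᶜ t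

/-!
A proper colouring of `G` with `k` colours is a homomorphism `G →g K_k`, and being Ramsey is
preserved along homomorphisms: a colouring of `K_k` pulls back to `G`, and cliques map
injectively. Hence `K_{χ(G)}` is Ramsey and `r(t₁,t₂) ≤ χ(G)`. In a colouring with `χ(G)`
colours any two colour classes are joined by an edge (otherwise they could be merged), so `G`
has at least `C(χ(G),2) ≥ C(r,2)` edges; `K_r` attains the bound.
-/

open SimpleGraph

namespace SimpleGraph

variable {V W α : Type*} {G : SimpleGraph V} {H : SimpleGraph W}

theorem IsNClique.image [DecidableEq W] (f : G →g H) {n : ℕ} {s : Finset V}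
    (hs : G.IsNClique n s) : H.IsNClique n (s.image f) := by
  have hinj : Set.InjOn f s := fun a ha b hb hab => by
    by_contra hne
    exact (f.map_adj (hs.1 ha hb hne)).ne hab
  refine ⟨?_, by rw [Finset.card_image_of_injOn hinj, hs.2]⟩
  rw [Finset.coe_image]
  rintro _ ⟨a, ha, rfl⟩ _ ⟨b, hb, rfl⟩ hne
  exact f.map_adj (hs.1 ha hb (ne_of_apply_ne f hne))

theorem Coloring.exists_adj_of_card_le_chromaticNumber [Fintype α] (C : G.Coloring α)
    (hC : Fintype.card α ≤ G.chromaticNumber) {i j : α} (hij : i ≠ j) :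
    ∃ u v, G.Adj u v ∧ C u = i ∧ C v = j := by
  classical
  by_contra! hno
  let D : G.Coloring α := Coloring.mk (fun v => if C v = j then i else C v) fun {u v} huv => by
    split_ifs <;> grind [C.valid huv, hno u v huv, hno v u huv.symm]
  obtain ⟨v, hv⟩ := card_le_chromaticNumber_iff_forall_surjective.1 hC D j
  simp only [D, Coloring.mk, RelHom.coeFn_mk] at hv
  split_ifs at hv <;> contradiction

theorem Coloring.choose_two_le_card_edgeFinset [Fintype α] [DecidableEq α] [Fintype G.edgeSet]
    (C : G.Coloring α) (hC : Fintype.card α ≤ G.chromaticNumber) :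
    (Fintype.card α).choose 2 ≤ #G.edgeFinset := by
  rw [← card_edgeFinset_top_eq_card_choose_two]
  refine card_le_card_of_surjOn (Sym2.map C) fun e he => ?_
  induction e with
  | _ i j =>
    obtain ⟨u, v, huv, rfl, rfl⟩ :=
      C.exists_adj_of_card_le_chromaticNumber hC (by simpa using he)
    exact ⟨s(u, v), by simpa using huv, rfl⟩

theorem choose_two_le_card_edgeFinset_of_le_chromaticNumber [Finite V] [Fintype G.edgeSet]
    {n : ℕ} (hn : n ≤ G.chromaticNumber) : n.choose 2 ≤ #G.edgeFinset := by
  obtain ⟨C⟩ := G.colorable_chromaticNumber_of_fintype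
  have hχ : (G.chromaticNumber.toNat : ℕ∞) = G.chromaticNumber :=
    ENat.natCast_toNat (chromaticNumber_ne_top_iff_exists.2 ⟨_, ⟨C⟩⟩)
  calc n.choose 2 ≤ G.chromaticNumber.toNat.choose 2 :=
        Nat.choose_le_choose 2 (by exact_mod_cast hn.trans_eq hχ.symm)
    _ ≤ #G.edgeFinset := by simpa using C.choose_two_le_card_edgeFinset (by simpa using hχ.le)

end SimpleGraph

theorem cliqueCount_two {V : Type*} [Fintype V] (G : SimpleGraph V) [Fintype G.edgeSet] :
    cliqueCount G 2 = #G.edgeFinset := by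
  classical
  unfold cliqueCount
  symm
  refine card_bij (fun e _ => e.toFinset) (fun e he => ?_) (fun e _ e' _ h => ?_) fun s hs => ?_
  · induction e with
    | _ u v =>
      rw [mem_edgeFinset, mem_edgeSet] at he
      rw [Sym2.toFinset_mk_eq, mem_cliqueFinset_iff, isNClique_iff, coe_pair, isClique_pair]
      exact ⟨fun _ => he, card_pair he.ne⟩
  · exact Sym2.ext fun x => by rw [← Sym2.mem_toFinset, h, Sym2.mem_toFinset]
  · rw [mem_cliqueFinset_iff] at hs
    obtain ⟨u, v, huv, rfl⟩ := card_eq_two.1 hs.2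
    exact ⟨s(u, v), by simpa using hs.1 (by simp) (by simp) huv, Sym2.toFinset_mk_eq⟩

namespace IsRamsey

variable {V W : Type*} {G : SimpleGraph V} {H : SimpleGraph W} {t1 t2 : ℕ}

theorem of_hom (hG : IsRamsey G t1 t2) (f : G →g H) : IsRamsey H t1 t2 := by
  classical
  rintro R -
  let red : G ⊓ R.comap f →g R := (Hom.comap f R).comp (Hom.ofLE inf_le_right)
  let blue : G \ (G ⊓ R.comap f) →g H \ R := ⟨f, fun {u v} huv => by
    simp only [sdiff_adj, inf_adj, comap_adj] at huv ⊢
    exact ⟨f.map_adj huv.1, fun h => huv.2 ⟨huv.1, h⟩⟩⟩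
  refine (hG (G ⊓ R.comap f) inf_le_left).imp ?_ ?_
  · rintro ⟨s, hs⟩
    exact ⟨_, hs.image red⟩
  · rintro ⟨s, hs⟩
    exact ⟨_, hs.image blue⟩

theorem top_of_colorable (hG : IsRamsey G t1 t2) {n : ℕ} (hn : G.Colorable n) :
    IsRamsey (⊤ : SimpleGraph (Fin n)) t1 t2 :=
  hn.elim hG.of_hom

theorem ramseyNumber_le_chromaticNumber (hG : IsRamsey G t1 t2) :
    (ramseyNumber t1 t2 : ℕ∞) ≤ G.chromaticNumber :=
  le_chromaticNumber_iff_colorable.2 fun _ hn => Nat.sInf_le (hG.top_of_colorable hn)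

theorem choose_two_le_card_edgeFinset [Finite V] [Fintype G.edgeSet] (hG : IsRamsey G t1 t2) :
    (ramseyNumber t1 t2).choose 2 ≤ #G.edgeFinset :=
  choose_two_le_card_edgeFinset_of_le_chromaticNumber hG.ramseyNumber_le_chromaticNumber

end IsRamsey

theorem ramseyCliqueNumber_two (t1 t2 : ℕ) :
    ramseyCliqueNumber 2 t1 t2 = (ramseyNumber t1 t2).choose 2 := by
  by_cases hT : ∃ n, IsRamsey (⊤ : SimpleGraph (Fin n)) t1 t2
  · have htop : IsRamsey (⊤ : SimpleGraph (Fin (ramseyNumber t1 t2))) t1 t2 := Nat.sInf_mem hT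
    refine le_antisymm (Nat.sInf_le ⟨_, ⊤, htop, ?_⟩) (le_csInf ⟨_, _, ⊤, htop, rfl⟩ ?_)
    · rw [cliqueCount_two, card_edgeFinset_top_eq_card_choose_two, Fintype.card_fin]
    · rintro _ ⟨n, G, hG, rfl⟩
      classical
      rw [cliqueCount_two]
      exact hG.choose_two_le_card_edgeFinset
  -- Ramsey's theorem is not needed: if no complete graph is Ramsey, no finite graph is either,
  -- and both sides are `sInf ∅ = 0`.
  · have hS : {N | ∃ (n : ℕ) (G : SimpleGraph (Fin n)), IsRamsey G t1 t2 ∧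
        cliqueCount G 2 = N} = ∅ :=
      Set.eq_empty_of_forall_notMem fun _ ⟨n, G, hG, _⟩ =>
        hT ⟨_, hG.top_of_colorable G.colorable_of_fintype⟩
    have hr : ramseyNumber t1 t2 = 0 :=
      Nat.sInf_eq_zero.2 (Or.inr (Set.eq_empty_of_forall_notMem fun n hn => hT ⟨n, hn⟩))
    rw [ramseyCliqueNumber, hS, hr, Nat.sInf_empty]
    rfl

/-- If a graph `G` is `(t₁,t₂)`-Ramsey then it has at least `C(r(t₁,t₂),2)` edges;
consequently the size Ramsey number (minimum number of copies of `K₂` in a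
`(t₁,t₂)`-Ramsey graph) equals `C(r(t₁,t₂),2)`. -/
theorem stmt0 (t1 t2 : ℕ) :
    (∀ (V : Type) [Fintype V] (G : SimpleGraph V) [DecidableRel G.Adj],
        IsRamsey G t1 t2 → (ramseyNumber t1 t2).choose 2 ≤ G.edgeFinset.card) ∧
      ramseyCliqueNumber 2 t1 t2 = (ramseyNumber t1 t2).choose 2 :=
  ⟨fun _ _ _ _ hG => hG.choose_two_le_card_edgeFinset, ramseyCliqueNumber_two t1 t2⟩
end

section
/- Let H be a graph on n vertices, and let r, R be positive integers and α ∈ [0,1] satisfy e^{-αr}·n ≤ R, and suppose every subset X ⊆ V(H) with |X| ≥ R satisfies 2·e(H[X]) ≥ α|X|². Then for any t ≥ r, the number of independent sets of size t in H is at most binom(n,r)·binom(R, t−r). -/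
/-! Kleitman–Winston containers. Starting from `X = V`, repeatedly take a vertex `v` of maximum
degree in `H[X]`; if `v` lies in the independent set `I`, record it and delete `v` together with its
neighbours, otherwise delete only `v`. Stop once `r` vertices `S ⊆ I` are recorded. Since `I` is
independent, no vertex of `I` is deleted unless recorded, so `I \ S` lies in the final set; and
replaying the procedure with `S` in place of `I` makes the same choices, so the final set depends on
`S` alone. While `|X| ≥ R`, the density hypothesis and the degree sum give `v` at least `α|X|`
neighbours in `X`, so each recorded vertex shrinks `X` by a factor `1 - α`; hence the final set has
at most `max(R, (1 - α)^r n) ≤ R` vertices, and an independent `t`-set is determined by an `r`-set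
`S` and a `(t - r)`-subset of a set of size at most `R`. -/

open Finset

/-- The number of edges of `H` inside the vertex set `X`. -/
noncomputable def edgeCountOn {V : Type*} [Fintype V] (H : SimpleGraph V) (X : Finset V) : ℕ := by
  classical exact (H.edgeFinset.filter (fun e => ∀ v ∈ e, v ∈ X)).card

theorem Finset.card_le_card_mul_choose_of_exists_fingerprint {α : Type*} [DecidableEq α]
    {𝒜 𝒮 : Finset (Finset α)} (C : Finset α → Finset α) {r t R : ℕ}
    (h𝒜 : ∀ A ∈ 𝒜, #A = t) (h𝒮 : ∀ S ∈ 𝒮, #S = r) (hC : ∀ S ∈ 𝒮, #(C S) ≤ R)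
    (hfinger : ∀ A ∈ 𝒜, ∃ S ∈ 𝒮, S ⊆ A ∧ A \ S ⊆ C S) :
    #𝒜 ≤ #𝒮 * R.choose (t - r) := by
  choose! f hf𝒮 hfA hfC using hfinger
  calc #𝒜 ≤ #(𝒮.sigma fun S => (C S).powersetCard (t - r)) := by
        refine card_le_card_of_injOn (fun A => ⟨f A, A \ f A⟩) (fun A hA => ?_) ?_
        · simp only [coe_sigma, Set.mem_sigma_iff, mem_coe, mem_powersetCard]
          refine ⟨hf𝒮 A hA, hfC A hA, ?_⟩
          rw [card_sdiff_of_subset (hfA A hA), h𝒜 A hA, h𝒮 _ (hf𝒮 A hA)]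
        · intro A hA B hB hAB
          simp only [Sigma.mk.injEq, heq_eq_eq] at hAB
          rw [← union_sdiff_of_subset (hfA A hA), ← union_sdiff_of_subset (hfA B hB), hAB.2,
            hAB.1]
    _ = ∑ S ∈ 𝒮, (#(C S)).choose (t - r) := by simp only [card_sigma, card_powersetCard]
    _ ≤ ∑ S ∈ 𝒮, R.choose (t - r) := sum_le_sum fun S hS => Nat.choose_le_choose _ (hC S hS)
    _ = #𝒮 * R.choose (t - r) := by rw [sum_const, smul_eq_mul]

namespace SimpleGraph

variable {V : Type*} [Fintype V] [DecidableEq V] (H : SimpleGraph V) [DecidableRel H.Adj]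

theorem indepCount_eq_card_cliqueFinset_compl (t : ℕ) :
    indepCount H t = #(Hᶜ.cliqueFinset t) := by
  rw [indepCount, cliqueCount]
  convert rfl

theorem two_mul_edgeCountOn (X : Finset V) :
    2 * edgeCountOn H X = ∑ v ∈ X, #(X ∩ H.neighborFinset v) := by
  classical
  set G := (H.induce (X : Set V)).spanningCoe
  have hedges : edgeCountOn H X = #G.edgeFinset := by
    unfold edgeCountOn
    congr 1
    ext e
    induction e using Sym2.ind with
    | _ a b =>
      simp only [G, mem_filter, mem_edgeFinset, mem_edgeSet, Sym2.mem_iff, forall_eq_or_imp,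
        forall_eq, map_adj, comap_adj, Function.Embedding.subtype_apply, Subtype.exists,
        exists_and_left, exists_prop, existsAndEq, and_true, true_and]
      tauto
  have hdeg : ∀ v, G.degree v = if v ∈ X then #(X ∩ H.neighborFinset v) else 0 := by
    intro v
    rw [← card_neighborFinset_eq_degree]
    split_ifs with hv
    · congr 1; ext w; simp [G, hv, and_comm]
    · rw [card_eq_zero, eq_empty_iff_forall_notMem]
      simp [G, hv]
  rw [hedges, ← sum_degrees_eq_twice_card_edges]
  simp only [hdeg, sum_ite_mem, univ_inter]

noncomputable def maxDegVertex (X : Finset V) (hX : X.Nonempty) : V :=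
  (X.exists_max_image (fun v => #(X ∩ H.neighborFinset v)) hX).choose

theorem maxDegVertex_mem (X : Finset V) (hX : X.Nonempty) : H.maxDegVertex X hX ∈ X :=
  (X.exists_max_image (fun v => #(X ∩ H.neighborFinset v)) hX).choose_spec.1

theorem card_inter_neighborFinset_le_maxDegVertex {X : Finset V} (hX : X.Nonempty) {w : V}
    (hw : w ∈ X) : #(X ∩ H.neighborFinset w) ≤ #(X ∩ H.neighborFinset (H.maxDegVertex X hX)) :=
  (X.exists_max_image (fun v => #(X ∩ H.neighborFinset v)) hX).choose_spec.2 w hw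

theorem sdiff_insert_neighborFinset_subset_erase (X : Finset V) (v : V) :
    X \ insert v (H.neighborFinset v) ⊆ X.erase v := by
  rw [erase_eq]
  exact sdiff_subset_sdiff le_rfl (singleton_subset_iff.2 (mem_insert_self _ _))

-- The procedure replayed with `S` as the independent set: for independent `S` it halts exactly
-- when every vertex of `S` has been recorded.
noncomputable def container (S X : Finset V) : Finset V :=
  if h : (S ∩ X).Nonempty then
    let v := H.maxDegVertex X (h.mono inter_subset_right)
    container S (if v ∈ S then X \ insert v (H.neighborFinset v) else X.erase v)
  else X
termination_by #X
decreasing_by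
  have hv := H.maxDegVertex_mem X (h.mono inter_subset_right)
  split_ifs
  · exact (card_le_card (H.sdiff_insert_neighborFinset_subset_erase X _)).trans_lt
      (card_erase_lt_of_mem hv)
  · exact card_erase_lt_of_mem hv

variable {H}

theorem container_of_not_nonempty {S X : Finset V} (h : ¬(S ∩ X).Nonempty) :
    H.container S X = X := by
  rw [container, dif_neg h]

theorem container_of_maxDegVertex_mem {S X : Finset V} (hX : X.Nonempty)
    (hv : H.maxDegVertex X hX ∈ S) :
    H.container S X =
      H.container S (X \ insert (H.maxDegVertex X hX) (H.neighborFinset (H.maxDegVertex X hX))) := by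
  rw [container, dif_pos ⟨_, mem_inter.2 ⟨hv, H.maxDegVertex_mem X hX⟩⟩]
  exact congrArg _ (if_pos hv)

theorem container_of_maxDegVertex_notMem {S X : Finset V} (hX : X.Nonempty)
    (hSX : (S ∩ X).Nonempty) (hv : H.maxDegVertex X hX ∉ S) :
    H.container S X = H.container S (X.erase (H.maxDegVertex X hX)) := by
  rw [container, dif_pos hSX]
  exact congrArg _ (if_neg hv)

theorem container_subset (S X : Finset V) : H.container S X ⊆ X := by
  induction X using strongInduction with
  | H X ih =>
    by_cases h : (S ∩ X).Nonempty
    · have hX := h.mono inter_subset_right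
      have hv := H.maxDegVertex_mem X hX
      by_cases hvS : H.maxDegVertex X hX ∈ S
      · rw [container_of_maxDegVertex_mem hX hvS]
        have hsub := H.sdiff_insert_neighborFinset_subset_erase X (H.maxDegVertex X hX)
        exact (ih _ (hsub.trans_ssubset (erase_ssubset hv))).trans sdiff_subset
      · rw [container_of_maxDegVertex_notMem hX h hvS]
        exact (ih _ (erase_ssubset hv)).trans (erase_subset _ _)
    · rw [container_of_not_nonempty h]

theorem container_congr {S T X : Finset V} (h : S ∩ X = T ∩ X) :
    H.container S X = H.container T X := by
  induction X using strongInduction generalizing S T with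
  | H X ih =>
    have hres : ∀ Y ⊆ X, S ∩ Y = T ∩ Y := fun Y hY => by
      rw [← inter_eq_right.2 hY, ← inter_assoc, h, inter_assoc]
    by_cases hne : (S ∩ X).Nonempty
    · have hX := hne.mono inter_subset_right
      have hv := H.maxDegVertex_mem X hX
      have hST : H.maxDegVertex X hX ∈ S ↔ H.maxDegVertex X hX ∈ T := by
        simpa [hv] using congrArg (H.maxDegVertex X hX ∈ ·) h
      by_cases hvS : H.maxDegVertex X hX ∈ S
      · have hsub := H.sdiff_insert_neighborFinset_subset_erase X (H.maxDegVertex X hX)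
        rw [container_of_maxDegVertex_mem hX hvS, container_of_maxDegVertex_mem hX (hST.1 hvS)]
        exact ih _ (hsub.trans_ssubset (erase_ssubset hv)) (hres _ sdiff_subset)
      · rw [container_of_maxDegVertex_notMem hX hne hvS,
          container_of_maxDegVertex_notMem hX (h ▸ hne) (hST.not.1 hvS)]
        exact ih _ (erase_ssubset hv) (hres _ (erase_subset _ _))
    · rw [container_of_not_nonempty hne, container_of_not_nonempty (h ▸ hne)]

theorem IsIndepSet.inter_sdiff_insert_neighborFinset {I : Finset V} (hI : H.IsIndepSet I)
    {v : V} (hv : v ∈ I) (X : Finset V) :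
    I ∩ (X \ insert v (H.neighborFinset v)) = (I ∩ X).erase v := by
  ext u
  simp only [mem_inter, mem_sdiff, mem_insert, mem_neighborFinset, mem_erase, not_or]
  constructor
  · rintro ⟨huI, huX, hne, -⟩
    exact ⟨hne, huI, huX⟩
  · rintro ⟨hne, huI, huX⟩
    exact ⟨huI, huX, hne, hI hv huI (Ne.symm hne)⟩

theorem IsIndepSet.exists_fingerprint {I : Finset V} (hI : H.IsIndepSet I) (X : Finset V)
    {k : ℕ} (hk : k ≤ #(I ∩ X)) : ∃ S ⊆ I ∩ X, #S = k ∧ (I ∩ X) \ S ⊆ H.container S X := by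
  induction X using strongInduction generalizing k with
  | H X ih =>
    cases k with
    | zero =>
      refine ⟨∅, empty_subset _, card_empty, ?_⟩
      rw [container_of_not_nonempty (by simp), sdiff_empty]
      exact inter_subset_right
    | succ k =>
      have hIX : (I ∩ X).Nonempty := card_pos.1 (by omega)
      have hX := hIX.mono inter_subset_right
      set v := H.maxDegVertex X hX
      have hv : v ∈ X := H.maxDegVertex_mem X hX
      by_cases hvI : v ∈ I
      · set X' := X \ insert v (H.neighborFinset v)
        have hvX' : v ∉ X' := by simp [X']
        have hIX' := hI.inter_sdiff_insert_neighborFinset hvI X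
        have hvIX : v ∈ I ∩ X := mem_inter.2 ⟨hvI, hv⟩
        obtain ⟨S, hS, hSk, hcont⟩ := ih X'
          ((H.sdiff_insert_neighborFinset_subset_erase X v).trans_ssubset (erase_ssubset hv))
          (k := k) (by rw [hIX', card_erase_of_mem hvIX]; omega)
        have hvS : v ∉ S := fun h => hvX' (mem_inter.1 (hS h)).2
        refine ⟨insert v S, insert_subset hvIX (hS.trans (inter_subset_inter_left sdiff_subset)),
          by rw [card_insert_of_notMem hvS, hSk], ?_⟩
        have hstep : H.container (insert v S) X = H.container S X' := by
          rw [container_of_maxDegVertex_mem hX (mem_insert_self v S)]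
          exact container_congr (insert_inter_of_notMem hvX')
        rwa [hstep, sdiff_insert, ← erase_sdiff_comm, ← hIX']
      · have hIX' : I ∩ X.erase v = I ∩ X := by
          rw [inter_erase, erase_eq_of_notMem fun h => hvI (mem_inter.1 h).1]
        obtain ⟨S, hS, hSk, hcont⟩ := ih (X.erase v) (erase_ssubset hv) (k := k + 1)
          (by rwa [hIX'])
        rw [hIX'] at hS hcont
        have hSX : (S ∩ X).Nonempty := by
          rw [inter_eq_left.2 (hS.trans inter_subset_right)]
          exact card_pos.1 (by omega)
        refine ⟨S, hS, hSk, ?_⟩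
        rwa [container_of_maxDegVertex_notMem hX hSX fun h => hvI (mem_inter.1 (hS h)).1]

theorem mul_card_le_card_inter_neighborFinset_maxDegVertex {α : ℝ} {X : Finset V}
    (hX : X.Nonempty) (hdense : α * #X ^ 2 ≤ 2 * edgeCountOn H X) :
    α * #X ≤ #(X ∩ H.neighborFinset (H.maxDegVertex X hX)) := by
  have hsum : 2 * edgeCountOn H X ≤ #X * #(X ∩ H.neighborFinset (H.maxDegVertex X hX)) := by
    rw [two_mul_edgeCountOn, ← smul_eq_mul]
    exact sum_le_card_nsmul _ _ _ fun w hw => H.card_inter_neighborFinset_le_maxDegVertex hX hw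
  have hpos : (0 : ℝ) < #X := by exact_mod_cast hX.card_pos
  refine le_of_mul_le_mul_left ?_ hpos
  calc (#X : ℝ) * (α * #X) = α * #X ^ 2 := by ring
    _ ≤ 2 * edgeCountOn H X := hdense
    _ ≤ _ := by exact_mod_cast hsum

theorem card_sdiff_insert_neighborFinset_maxDegVertex_le {α : ℝ} {X : Finset V}
    (hX : X.Nonempty) (hdense : α * #X ^ 2 ≤ 2 * edgeCountOn H X) :
    (#(X \ insert (H.maxDegVertex X hX) (H.neighborFinset (H.maxDegVertex X hX))) : ℝ) ≤
      (1 - α) * #X := by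
  set v := H.maxDegVertex X hX
  have hsplit : (#(X \ insert v (H.neighborFinset v)) : ℝ) +
      #(X ∩ insert v (H.neighborFinset v)) = #X := by
    exact_mod_cast card_sdiff_add_card_inter _ _
  have hdeg : (#(X ∩ H.neighborFinset v) : ℝ) ≤ #(X ∩ insert v (H.neighborFinset v)) := by
    exact_mod_cast card_le_card (inter_subset_inter_left (subset_insert _ _))
  linarith [H.mul_card_le_card_inter_neighborFinset_maxDegVertex hX hdense]

theorem IsIndepSet.card_container_le {α : ℝ} {R : ℕ} (hα : α ≤ 1)
    (hdense : ∀ X : Finset V, R ≤ #X → α * #X ^ 2 ≤ 2 * edgeCountOn H X)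
    {S : Finset V} (hS : H.IsIndepSet S) (X : Finset V) :
    (#(H.container S X) : ℝ) ≤ max (R : ℝ) ((1 - α) ^ #(S ∩ X) * #X) := by
  induction X using strongInduction with
  | H X ih =>
    by_cases hXR : #X ≤ R
    · exact le_max_of_le_left (by exact_mod_cast (card_le_card (container_subset S X)).trans hXR)
    by_cases hne : (S ∩ X).Nonempty
    · have hX := hne.mono inter_subset_right
      have hv := H.maxDegVertex_mem X hX
      have hq : (0 : ℝ) ≤ 1 - α := by linarith
      by_cases hvS : H.maxDegVertex X hX ∈ S
      · have hsub := H.sdiff_insert_neighborFinset_subset_erase X (H.maxDegVertex X hX)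
        have hSX' := hS.inter_sdiff_insert_neighborFinset hvS X
        have hshrink := H.card_sdiff_insert_neighborFinset_maxDegVertex_le hX (hdense X (by omega))
        rw [container_of_maxDegVertex_mem hX hvS]
        refine (ih _ (hsub.trans_ssubset (erase_ssubset hv))).trans (max_le_max le_rfl ?_)
        rw [hSX', card_erase_of_mem (mem_inter.2 ⟨hvS, hv⟩)]
        calc (1 - α) ^ (#(S ∩ X) - 1) * _ ≤ (1 - α) ^ (#(S ∩ X) - 1) * ((1 - α) * #X) :=
              mul_le_mul_of_nonneg_left hshrink (pow_nonneg hq _)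
          _ = (1 - α) ^ #(S ∩ X) * #X := by
              rw [← mul_assoc, ← pow_succ, Nat.sub_add_cancel hne.card_pos]
      · have hSX' : S ∩ X.erase (H.maxDegVertex X hX) = S ∩ X := by
          rw [inter_erase, erase_eq_of_notMem fun h => hvS (mem_inter.1 h).1]
        rw [container_of_maxDegVertex_notMem hX hne hvS]
        refine (ih _ (erase_ssubset hv)).trans (max_le_max le_rfl ?_)
        rw [hSX']
        exact mul_le_mul_of_nonneg_left (by exact_mod_cast card_erase_le) (pow_nonneg hq _)
    · rw [container_of_not_nonempty hne, not_nonempty_iff_eq_empty.1 hne, card_empty, pow_zero,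
        one_mul]
      exact le_max_right _ _

theorem card_container_univ_le {α : ℝ} {R r : ℕ} (hα : α ≤ 1)
    (hdense : ∀ X : Finset V, R ≤ #X → α * #X ^ 2 ≤ 2 * edgeCountOn H X)
    {S : Finset V} (hS : S ∈ Hᶜ.cliqueFinset r) :
    (#(H.container S univ) : ℝ) ≤ max (R : ℝ) ((1 - α) ^ r * Fintype.card V) := by
  have hS := mem_cliqueFinset_iff.1 hS
  simpa only [inter_univ, card_univ, hS.card_eq] using
    (H.isClique_compl.1 hS.isClique).card_container_le hα hdense univ

theorem exists_fingerprint_of_mem_cliqueFinset_compl {r t : ℕ} (hrt : r ≤ t) {I : Finset V}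
    (hI : I ∈ Hᶜ.cliqueFinset t) :
    ∃ S ∈ Hᶜ.cliqueFinset r, S ⊆ I ∧ I \ S ⊆ H.container S univ := by
  have hI := mem_cliqueFinset_iff.1 hI
  obtain ⟨S, hSI, hSr, hIS⟩ :=
    (H.isClique_compl.1 hI.isClique).exists_fingerprint univ (k := r)
      (by rwa [inter_univ, hI.card_eq])
  rw [inter_univ] at hSI hIS
  exact ⟨S, mem_cliqueFinset_iff.2 ⟨hI.isClique.subset hSI, hSr⟩, hSI, hIS⟩

end SimpleGraph

theorem stmt3_general {V : Type*} [Fintype V] (H : SimpleGraph V) (n r R t : ℕ) (α : ℝ)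
    (hn : Fintype.card V = n)
    (hα1 : α ≤ 1)
    (h1 : Real.exp (-(α * r)) * n ≤ R)
    (h2 : ∀ X : Finset V, R ≤ X.card → α * (X.card : ℝ) ^ 2 ≤ 2 * (edgeCountOn H X : ℝ))
    (ht : r ≤ t) :
    indepCount H t ≤ n.choose r * R.choose (t - r) := by
  classical
  have hdecay : (1 - α) ^ r * n ≤ (R : ℝ) := by
    refine le_trans (mul_le_mul_of_nonneg_right ?_ n.cast_nonneg) h1
    rw [show -(α * r) = r * -α by ring, Real.exp_nat_mul]
    exact pow_le_pow_left₀ (by linarith) (Real.one_sub_le_exp_neg α) r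
  have hcontainer : ∀ S ∈ Hᶜ.cliqueFinset r, #(H.container S univ) ≤ R := fun S hS => by
    have := H.card_container_univ_le hα1 h2 hS
    rw [hn] at this
    exact_mod_cast this.trans (max_le le_rfl hdecay)
  rw [H.indepCount_eq_card_cliqueFinset_compl]
  exact (card_le_card_mul_choose_of_exists_fingerprint (H.container · univ)
    (fun I hI => (SimpleGraph.mem_cliqueFinset_iff.1 hI).card_eq)
    (fun S hS => (SimpleGraph.mem_cliqueFinset_iff.1 hS).card_eq) hcontainer
    fun I hI => H.exists_fingerprint_of_mem_cliqueFinset_compl ht hI).trans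
    (Nat.mul_le_mul_right _ (hn ▸ SimpleGraph.card_cliqueFinset_le))

/-- Mattheus–Verstraëte, Proposition 4: if `e^{-αr}·n ≤ R` and every `X` with `|X| ≥ R`
satisfies `2e(H[X]) ≥ α|X|²`, then for `t ≥ r` the number of independent sets of size `t`
in `H` is at most `C(n,r)·C(R,t−r)`. -/
theorem stmt3 {V : Type*} [Fintype V] (H : SimpleGraph V) (n r R t : ℕ) (α : ℝ)
    (hn : Fintype.card V = n) (hr : 0 < r) (hR : 0 < R)
    (hα0 : 0 ≤ α) (hα1 : α ≤ 1)
    (h1 : Real.exp (-(α * r)) * n ≤ R)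
    (h2 : ∀ X : Finset V, R ≤ X.card → α * (X.card : ℝ) ^ 2 ≤ 2 * (edgeCountOn H X : ℝ))
    (ht : r ≤ t) :
    indepCount H t ≤ n.choose r * R.choose (t - r) :=
  stmt3_general H n r R t α hn hα1 h1 h2 ht
end

section
/- (Kruskal–Katona, Lovász form, set version) Let X be a set, s ≤ t positive integers, A a family of t-element subsets of X, and B the family of all s-element subsets of members of A. If |A| ≥ binom(n,t) for a positive integer n ≥ t, then |B| ≥ binom(n,s). -/
open Finset

/-!
For a `t`-uniform family `𝒜`, the `(t - s)`-th iterated shadow is exactly the family of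
`s`-subsets of members of `𝒜`, so the statement is Mathlib's Lovász form of Kruskal–Katona once
the family is moved to a finite type. Every member of `A` lies in the finite ground set `U`;
padding `U` with `n` fresh points gives a finite type with at least `n` elements, which spares
us from comparing `n` with `|U|`.
-/

namespace Finset

open scoped FinsetFamily

variable {α β : Type*} [DecidableEq α] [DecidableEq β]

theorem card_map_mapEmbedding_biUnion_powersetCard (f : α ↪ β) (𝒜 : Finset (Finset α)) (s : ℕ) :
    #((𝒜.map (mapEmbedding f).toEmbedding).biUnion (powersetCard s)) =
      #(𝒜.biUnion (powersetCard s)) := by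
  rw [← card_map (mapEmbedding f).toEmbedding, map_eq_image, map_eq_image, image_biUnion,
    biUnion_image]
  refine congrArg card (biUnion_congr rfl fun T _ => ?_)
  simp only [RelEmbedding.coe_toEmbedding, mapEmbedding_apply]
  rw [powersetCard_map, map_eq_image]
  rfl

omit [DecidableEq α] [DecidableEq β] in
theorem _root_.Set.Sized.map_mapEmbedding {r : ℕ} {𝒜 : Finset (Finset α)}
    (h𝒜 : (𝒜 : Set (Finset α)).Sized r) (f : α ↪ β) :
    (𝒜.map (mapEmbedding f).toEmbedding : Set (Finset β)).Sized r := by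
  simp only [Set.Sized, coe_map, Set.forall_mem_image, RelEmbedding.coe_toEmbedding,
    mapEmbedding_apply, card_map]
  exact h𝒜

theorem shadow_iterate_eq_biUnion_powersetCard {r s : ℕ} {𝒜 : Finset (Finset α)}
    (h𝒜 : (𝒜 : Set (Finset α)).Sized r) (hsr : s ≤ r) :
    ∂^[r - s] 𝒜 = 𝒜.biUnion (powersetCard s) := by
  ext T
  simp only [mem_shadow_iterate_iff_exists_mem_card_add, mem_biUnion, mem_powersetCard]
  refine exists_congr fun S => and_congr_right fun hS => and_congr_right fun hTS => ?_
  have := card_le_card hTS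
  rw [h𝒜 hS] at this ⊢
  omega

theorem exists_map_subtype_eq {𝒜 : Finset (Finset α)} {U : Finset α} (h : ∀ T ∈ 𝒜, T ⊆ U) :
    ∃ ℬ : Finset (Finset U),
      ℬ.map (mapEmbedding (Function.Embedding.subtype (· ∈ U))).toEmbedding = 𝒜 := by
  refine ⟨𝒜.image (·.subtype (· ∈ U)), ?_⟩
  rw [map_eq_image, image_image]
  refine (image_congr fun T hT => ?_).trans image_id
  exact subtype_map_of_mem (h T hT)

theorem kruskal_katona_lovasz_form_biUnion [Fintype α] {s t n : ℕ} (hst : s ≤ t) (htn : t ≤ n)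
    (hn : n ≤ Fintype.card α) {𝒜 : Finset (Finset α)} (h𝒜 : (𝒜 : Set (Finset α)).Sized t)
    (hcard : n.choose t ≤ #𝒜) :
    n.choose s ≤ #(𝒜.biUnion (powersetCard s)) := by
  let f := (Fintype.equivFin α).toEmbedding
  have h𝒜f := h𝒜.map_mapEmbedding f
  rw [← card_map_mapEmbedding_biUnion_powersetCard f,
    ← shadow_iterate_eq_biUnion_powersetCard h𝒜f hst]
  simpa only [Nat.sub_sub_self hst] using
    kruskal_katona_lovasz_form (Nat.sub_le t s) htn hn h𝒜f (by rwa [card_map])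

end Finset

theorem stmt4_general {X : Type*} [DecidableEq X] (s t n : ℕ) (hst : s ≤ t)
    (htn : t ≤ n) (A : Finset (Finset X)) (hA : ∀ T ∈ A, T.card = t)
    (hcard : n.choose t ≤ A.card) :
    n.choose s ≤ (A.biUnion (fun T => T.powersetCard s)).card := by
  obtain ⟨U, hU⟩ : ∃ U : Finset X, ∀ T ∈ A, T ⊆ U :=
    ⟨A.biUnion id, fun T hT => subset_biUnion_of_mem id hT⟩
  obtain ⟨A', rfl⟩ := exists_map_subtype_eq hU
  have hA' : (A' : Set (Finset U)).Sized t := by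
    simpa [Set.Sized] using hA
  rw [card_map_mapEmbedding_biUnion_powersetCard,
    ← card_map_mapEmbedding_biUnion_powersetCard (Function.Embedding.inl (β := Fin n))]
  refine kruskal_katona_lovasz_form_biUnion hst htn ?_ (hA'.map_mapEmbedding _) ?_
  · simp
  · simpa using hcard

/-- Kruskal–Katona theorem, Lovász form (set version): if `A` is a family of `t`-element
subsets of `X` with `|A| ≥ C(n,t)`, and `B` is the family of all `s`-element subsets of
members of `A`, then `|B| ≥ C(n,s)`. -/
theorem stmt4 {X : Type*} [DecidableEq X] (s t n : ℕ) (hs : 0 < s) (hst : s ≤ t)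
    (htn : t ≤ n) (A : Finset (Finset X)) (hA : ∀ T ∈ A, T.card = t)
    (hcard : n.choose t ≤ A.card) :
    n.choose s ≤ (A.biUnion (fun T => T.powersetCard s)).card :=
  stmt4_general s t n hst htn A hA hcard
end

section
/- If a graph G contains at least binom(n,t) copies of K_t (as vertex subsets spanning cliques) for some n ≥ t, then for every s ≤ t, G contains at least binom(n,s) copies of K_s. -/
/-!
The `t`-cliques of `G` form a `t`-uniform family whose `(t - s)`-fold shadow consists of
`s`-cliques, so the Lovász form of Kruskal–Katona bounds the number of `s`-cliques from below.
Mathlib proves that form for families on `Fin n`; it transfers to any finite ground set by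
embedding it into `Fin n` for large `n`, since shadows commute with injective maps.
-/

open Finset

open FinsetFamily

namespace Finset

variable {α β : Type*} [DecidableEq α] [DecidableEq β]

lemma shadow_map (f : α ↪ β) (𝒜 : Finset (Finset α)) :
    ∂ (𝒜.map (mapEmbedding f).toEmbedding) = (∂ 𝒜).map (mapEmbedding f).toEmbedding := by
  ext t
  simp only [mem_shadow_iff, mem_map, RelEmbedding.coe_toEmbedding, mapEmbedding_apply]
  constructor
  · rintro ⟨_, ⟨s, hs, rfl⟩, b, hb, rfl⟩
    obtain ⟨a, ha, rfl⟩ := mem_map.1 hb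
    exact ⟨_, ⟨s, hs, a, ha, rfl⟩, map_erase f s a⟩
  · rintro ⟨_, ⟨s, hs, a, ha, rfl⟩, rfl⟩
    exact ⟨_, ⟨s, hs, rfl⟩, f a, mem_map_of_mem f ha, (map_erase f s a).symm⟩

lemma shadow_iterate_map (f : α ↪ β) (𝒜 : Finset (Finset α)) (i : ℕ) :
    ∂^[i] (𝒜.map (mapEmbedding f).toEmbedding) = (∂^[i] 𝒜).map (mapEmbedding f).toEmbedding :=
  ((Function.Semiconj.iterate_right (fun 𝒜 ↦ (shadow_map f 𝒜).symm) i) 𝒜).symm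

theorem kruskal_katona_lovasz_form_of_fintype [Fintype α] {𝒜 : Finset (Finset α)} {i r k : ℕ}
    (hir : i ≤ r) (hrk : r ≤ k) (h₁ : (𝒜 : Set (Finset α)).Sized r) (h₂ : k.choose r ≤ #𝒜) :
    k.choose (r - i) ≤ #(∂^[i] 𝒜) := by
  let f : α ↪ Fin (max k (Fintype.card α)) :=
    (Fintype.equivFin α).toEmbedding.trans (Fin.castLEEmb (le_max_right _ _))
  let F := (mapEmbedding f).toEmbedding
  have hsized : (↑(𝒜.map F) : Set (Finset (Fin (max k (Fintype.card α))))).Sized r := by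
    simpa [F, Set.Sized] using h₁
  have := kruskal_katona_lovasz_form hir hrk (le_max_left _ _) hsized (by rwa [card_map])
  rwa [shadow_iterate_map, card_map] at this

end Finset

lemma SimpleGraph.shadow_iterate_cliqueFinset_subset {V : Type*} [Fintype V] [DecidableEq V]
    (G : SimpleGraph V) [DecidableRel G.Adj] {s t : ℕ} (hst : s ≤ t) :
    ∂^[t - s] (G.cliqueFinset t) ⊆ G.cliqueFinset s := by
  intro u hu
  obtain ⟨c, hc, huc, hcard⟩ := mem_shadow_iterate_iff_exists_sdiff.1 hu
  rw [SimpleGraph.mem_cliqueFinset_iff] at hc ⊢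
  refine ⟨hc.1.subset huc, ?_⟩
  rw [card_sdiff_of_subset huc, hc.2] at hcard
  have := hc.2 ▸ card_le_card huc
  omega

/-- Graph form of Kruskal–Katona: if `G` contains at least `C(n,t)` copies of `K_t`
with `t ≤ n`, then for every `s ≤ t` it contains at least `C(n,s)` copies of `K_s`. -/
theorem stmt5 {V : Type*} [Fintype V] (G : SimpleGraph V) (n s t : ℕ) (hst : s ≤ t)
    (htn : t ≤ n) (hG : n.choose t ≤ cliqueCount G t) :
    n.choose s ≤ cliqueCount G s := by
  classical
  simp only [cliqueCount] at hG ⊢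
  have hkk := kruskal_katona_lovasz_form_of_fintype (Nat.sub_le t s) htn
    (fun _ h ↦ (SimpleGraph.mem_cliqueFinset_iff.1 h).2) hG
  rw [Nat.sub_sub_self hst] at hkk
  exact hkk.trans (card_le_card (G.shadow_iterate_cliqueFinset_subset hst))
end

section
/- Suppose there exists a K_4-free graph H on n vertices such that every t-clique of a (4,t)-Ramsey graph G is mapped to an independent set of H with probability at most ρ under a uniformly random map V(G) → V(H). Then every (4,t)-Ramsey graph contains at least 1/ρ copies of K_t; i.e., r_{K_t}(4,t) ≥ 1/ρ. -/
open Finset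

/-!
Pull the edges of `H` back along a map `π : V(G) → V(H)` and colour an edge of `G` red when its
image is an edge of `H`. A red `K₄` would map onto a `K₄` of `H`, so the Ramsey property of `G`
yields a blue `K_t`, i.e. a `t`-clique of `G` whose image is independent in `H`. Hence the events
"`K` is mapped to an independent set", over the `t`-cliques `K` of `G`, cover all maps, and the
union bound gives `1 ≤ ρ · #{t-cliques of G}`. The minimum defining `r_{K_t}(4,t)` is attained
because `(4,t)`-Ramsey graphs exist by Ramsey's theorem.
-/

namespace SimpleGraph

theorem exists_isNClique_or_isNClique_compl (s t : ℕ) :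
    ∃ N : ℕ, ∀ {V : Type*} (G : SimpleGraph V) (A : Finset V), N ≤ #A →
      (∃ S ⊆ A, G.IsNClique s S) ∨ ∃ S ⊆ A, Gᶜ.IsNClique t S := by
  classical
  induction s generalizing t with
  | zero => exact ⟨0, fun _ A _ => .inl ⟨∅, empty_subset A, by simp⟩⟩
  | succ s ihs =>
    induction t with
    | zero => exact ⟨0, fun _ A _ => .inr ⟨∅, empty_subset A, by simp⟩⟩
    | succ t iht =>
      obtain ⟨N₁, hN₁⟩ := ihs (t + 1)
      obtain ⟨N₂, hN₂⟩ := iht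
      refine ⟨N₁ + N₂ + 1, fun G A hA => ?_⟩
      obtain ⟨v, hv⟩ : A.Nonempty := card_pos.1 (by omega)
      set B := (A.erase v).filter (G.Adj v)
      set C := (A.erase v).filter (fun w => ¬G.Adj v w)
      have hBA : B ⊆ A := (filter_subset _ _).trans (erase_subset v A)
      have hCA : C ⊆ A := (filter_subset _ _).trans (erase_subset v A)
      have hBC : #B + #C + 1 = #A := by
        rw [card_filter_add_card_filter_not, card_erase_add_one hv]
      by_cases hB : N₁ ≤ #B
      · rcases hN₁ G B hB with ⟨S, hSB, hS⟩ | ⟨S, hSB, hS⟩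
        · refine .inl ⟨insert v S, insert_subset hv (hSB.trans hBA), hS.insert fun w hw => ?_⟩
          exact (mem_filter.1 (hSB hw)).2
        · exact .inr ⟨S, hSB.trans hBA, hS⟩
      · rcases hN₂ G C (by omega) with ⟨S, hSC, hS⟩ | ⟨S, hSC, hS⟩
        · exact .inl ⟨S, hSC.trans hCA, hS⟩
        · refine .inr ⟨insert v S, insert_subset hv (hSC.trans hCA), hS.insert fun w hw => ?_⟩
          obtain ⟨hw, hvw⟩ := mem_filter.1 (hSC hw)
          exact (compl_adj G v w).2 ⟨(ne_of_mem_erase hw).symm, hvw⟩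

variable {V W : Type*}

theorem IsNClique.image_of_hom [DecidableEq W] {G : SimpleGraph V} {H : SimpleGraph W}
    (f : G →g H) {n : ℕ} {s : Finset V} (hs : G.IsNClique n s) :
    H.IsNClique n (s.image f) := by
  have hinj : Set.InjOn f s := fun u hu w hw huw => by
    by_contra hne
    exact (f.map_adj (hs.1 hu hw hne)).ne huw
  refine ⟨?_, by rw [card_image_of_injOn hinj, hs.2]⟩
  rw [coe_image]
  rintro _ ⟨u, hu, rfl⟩ _ ⟨w, hw, rfl⟩ hne
  exact f.map_adj (hs.1 hu hw fun h => hne (h ▸ rfl))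

theorem CliqueFree.of_hom {G : SimpleGraph V} {H : SimpleGraph W} (f : G →g H) {n : ℕ}
    (hH : H.CliqueFree n) : G.CliqueFree n := by
  classical
  exact fun s hs => hH _ (hs.image_of_hom f)

end SimpleGraph

open SimpleGraph

theorem exists_isRamsey_top (s t : ℕ) : ∃ N : ℕ, IsRamsey (⊤ : SimpleGraph (Fin N)) s t := by
  obtain ⟨N, hN⟩ := exists_isNClique_or_isNClique_compl s t
  refine ⟨N, fun R _ => ?_⟩
  rw [top_sdiff]
  rcases hN R univ (by simp) with ⟨S, -, hS⟩ | ⟨S, -, hS⟩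
  exacts [.inl ⟨S, hS⟩, .inr ⟨S, hS⟩]

theorem exists_isRamsey_cliqueCount_eq_ramseyCliqueNumber (s t₁ t₂ : ℕ) :
    ∃ (n : ℕ) (G : SimpleGraph (Fin n)), IsRamsey G t₁ t₂ ∧
      cliqueCount G s = ramseyCliqueNumber s t₁ t₂ := by
  obtain ⟨N, hN⟩ := exists_isRamsey_top t₁ t₂
  exact Nat.sInf_mem (s := {N | ∃ (n : ℕ) (G : SimpleGraph (Fin n)), IsRamsey G t₁ t₂ ∧
    cliqueCount G s = N}) ⟨_, N, ⊤, hN, rfl⟩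

theorem cliqueCount_eq_card_cliqueFinset {V : Type*} [Fintype V] [DecidableEq V]
    (G : SimpleGraph V) [DecidableRel G.Adj] (s : ℕ) :
    cliqueCount G s = #(G.cliqueFinset s) := by
  unfold cliqueCount
  congr!

theorem IsRamsey.exists_isNClique_forall_not_adj {V W : Type*} {G : SimpleGraph V} {s t : ℕ}
    (hG : IsRamsey G s t) {H : SimpleGraph W} (hH : H.CliqueFree s) (π : V → W) :
    ∃ K : Finset V, G.IsNClique t K ∧ ∀ u ∈ K, ∀ w ∈ K, ¬H.Adj (π u) (π w) := by
  let toH : (G ⊓ H.comap π) →g H := { toFun := π, map_rel' := fun h => h.2 }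
  rcases hG (G ⊓ H.comap π) inf_le_left with ⟨S, hS⟩ | ⟨K, hK⟩
  · exact (hH.of_hom toH S hS).elim
  · refine ⟨K, hK.mono sdiff_le, fun u hu w hw => ?_⟩
    obtain rfl | huw := eq_or_ne u w
    · exact H.loopless.irrefl _
    · obtain ⟨hGuw, hnot_red⟩ := (sdiff_adj _ _ u w).1 (hK.1 hu hw huw)
      exact fun hadj => hnot_red ⟨hGuw, hadj⟩

theorem Finset.one_le_card_mul_of_forall_exists_mem {α β : Type*} [Fintype α] [Nonempty α]
    (C : Finset β) (E : β → Finset α) (hcover : ∀ x, ∃ K ∈ C, x ∈ E K) {ρ : ℝ}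
    (hE : ∀ K ∈ C, (#(E K) : ℝ) / Fintype.card α ≤ ρ) :
    1 ≤ (#C : ℝ) * ρ := by
  classical
  have hα : (0 : ℝ) < Fintype.card α := by exact_mod_cast Fintype.card_pos
  have hunion : Fintype.card α ≤ ∑ K ∈ C, #(E K) :=
    calc Fintype.card α = #(C.biUnion E) := by
          rw [← card_univ, eq_univ_of_forall fun x => mem_biUnion.2 (hcover x)]
      _ ≤ ∑ K ∈ C, #(E K) := card_biUnion_le
  have : (Fintype.card α : ℝ) ≤ #C * ρ * Fintype.card α :=
    calc (Fintype.card α : ℝ) ≤ ∑ K ∈ C, (#(E K) : ℝ) := by exact_mod_cast hunion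
      _ ≤ ∑ _K ∈ C, ρ * Fintype.card α :=
          sum_le_sum fun K hK => (div_le_iff₀ hα).1 (hE K hK)
      _ = #C * ρ * Fintype.card α := by rw [sum_const, nsmul_eq_mul, mul_assoc]
  nlinarith

/-- If there is a `K₄`-free graph `H` on `n` vertices such that for every `(4,t)`-Ramsey
graph `G`, every `t`-clique of `G` is mapped to an independent set of `H` with probability
at most `ρ` under a uniformly random map `V(G) → V(H)`, then `r_{K_t}(4,t) ≥ 1/ρ`. -/
theorem stmt11 {VH : Type*} [Fintype VH] [DecidableEq VH]
    (H : SimpleGraph VH) [DecidableRel H.Adj] (t n : ℕ)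
    (hn : Fintype.card VH = n) (hn0 : 0 < n)
    (hH : H.CliqueFree 4) (ρ : ℝ) (hρ0 : 0 < ρ)
    (hρ : ∀ (m : ℕ) (G : SimpleGraph (Fin m)), IsRamsey G 4 t →
      ∀ K : Finset (Fin m), G.IsNClique t K →
        ((univ.filter (fun π : Fin m → VH =>
            ∀ a ∈ K.image π, ∀ b ∈ K.image π, ¬H.Adj a b)).card : ℝ) / (n : ℝ) ^ m ≤ ρ) :
    1 / ρ ≤ (ramseyCliqueNumber t 4 t : ℝ) := by
  classical
  obtain ⟨m, G, hG, hcount⟩ := exists_isRamsey_cliqueCount_eq_ramseyCliqueNumber t 4 t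
  have : Nonempty VH := Fintype.card_pos_iff.1 (hn ▸ hn0)
  rw [div_le_iff₀ hρ0, ← hcount, cliqueCount_eq_card_cliqueFinset]
  refine one_le_card_mul_of_forall_exists_mem (G.cliqueFinset t)
    (fun K => univ.filter fun π : Fin m → VH => ∀ a ∈ K.image π, ∀ b ∈ K.image π, ¬H.Adj a b)
    (fun π => ?_) (fun K hK => ?_)
  · obtain ⟨K, hK, hindep⟩ := hG.exists_isNClique_forall_not_adj hH π
    exact ⟨K, mem_cliqueFinset_iff.2 hK, by simpa [forall_mem_image] using hindep⟩
  · simpa [Fintype.card_fun, hn] using hρ m G hG K (mem_cliqueFinset_iff.1 hK)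
end

section
/- Suppose for each i with 1 ≤ i ≤ t the number of independent sets of size i in an n-vertex graph H is at most M_i, where M_i = binom(n,i) for i ≤ t/8 and M_i = Q^i for t/8 < i ≤ t (with Q ≥ 1). Then for a uniformly random map π from a t-set K into V(H), the probability that π(K) is independent in H is at most Σ_{i=1}^{t/8} binom(n,i)(i/n)^t + Σ_{i=t/8+1}^{t} Q^i (i/n)^t ≤ 2·n^{-(7t/8)}·t^t + 2·Q^t·(t/n)^t. -/
open Finset

/-! A map `π : K → V` with independent image factors through its image `S`, an independent set
of some size `i ∈ [1, t]`, and at most `i ^ t` maps have image `S`; dividing by `n ^ t` gives the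
first bound. For the second, both summands at least double from `i` to `i + 1`: by Bernoulli,
`(1 + 1/i) ^ t ≥ 1 + t/i ≥ 2` for `i < t`, and `C(n, i) ≤ C(n, i + 1)` for `i < n/2`. So each sum
is at most twice its last term, and for the first sum that term is at most
`n ^ (t/8) (t/n) ^ t ≤ n ^ (-7t/8) t ^ t`. -/

theorem two_mul_pow_le_add_one_pow {i t : ℕ} (hit : i < t) :
    2 * (i : ℝ) ^ t ≤ ((i : ℝ) + 1) ^ t := by
  rcases Nat.eq_zero_or_pos i with rfl | hi
  · simp [zero_pow hit.ne']
  have hi' : (0 : ℝ) < i := by exact_mod_cast hi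
  have hbernoulli : 1 + t * (1 / (i : ℝ)) ≤ (1 + 1 / i) ^ t :=
    one_add_mul_le_pow (by linarith [one_div_pos.mpr hi']) t
  have htwo : (1 : ℝ) ≤ t * (1 / (i : ℝ)) := by
    rw [mul_one_div, one_le_div hi']; exact_mod_cast hit.le
  calc 2 * (i : ℝ) ^ t ≤ (i : ℝ) ^ t * (1 + 1 / i) ^ t := by
        rw [mul_comm]; gcongr; linarith
    _ = ((i : ℝ) + 1) ^ t := by rw [← mul_pow]; field_simp

theorem two_mul_div_pow_le_add_one_div_pow {i t : ℕ} (hit : i < t) {n : ℝ} (hn : 0 ≤ n) :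
    2 * ((i : ℝ) / n) ^ t ≤ (((i : ℝ) + 1) / n) ^ t := by
  rw [div_pow, div_pow, ← mul_div_assoc]
  gcongr
  exact two_mul_pow_le_add_one_pow hit

theorem sum_Icc_le_two_mul_of_two_mul_le {R : Type*} [Semiring R] [PartialOrder R]
    [IsOrderedRing R] {f : ℕ → R} {s t : ℕ} (hst : s ≤ t) (hs : 0 ≤ f s)
    (hf : ∀ i, s ≤ i → i < t → 2 * f i ≤ f (i + 1)) :
    ∑ i ∈ Icc s t, f i ≤ 2 * f t := by
  induction t, hst using Nat.le_induction with
  | base => simpa [two_mul] using add_le_add_left hs (f s)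
  | succ k hsk ih =>
    rw [Finset.sum_Icc_succ_top (by omega)]
    calc ∑ i ∈ Icc s k, f i + f (k + 1) ≤ 2 * f k + f (k + 1) := by
          gcongr; exact ih fun i h1 h2 => hf i h1 (by omega)
      _ ≤ 2 * f (k + 1) := by rw [two_mul (f (k + 1))]; gcongr; exact hf k hsk (by omega)

section Counting

variable {K V : Type*} [Fintype K] [DecidableEq K] [Fintype V] [DecidableEq V]

theorem card_filter_image_eq_le (S : Finset V) :
    #{π : K → V | univ.image π = S} ≤ #S ^ Fintype.card K := by
  calc #{π : K → V | univ.image π = S} ≤ #(Fintype.piFinset fun _ : K => S) := by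
        refine card_le_card fun π hπ => Fintype.mem_piFinset.2 fun k => ?_
        rw [← (mem_filter.1 hπ).2]
        exact mem_image_of_mem π (mem_univ k)
    _ = #S ^ Fintype.card K := by simp

theorem card_filter_image_mem_le (𝒜 : Finset (Finset V)) :
    #{π : K → V | univ.image π ∈ 𝒜} ≤ ∑ S ∈ 𝒜, #S ^ Fintype.card K := by
  have hmaps : Set.MapsTo (fun π : K → V => univ.image π)
      (({π | univ.image π ∈ 𝒜} : Finset (K → V)) : Set (K → V)) 𝒜 :=
    fun π hπ => by simpa using hπ
  rw [card_eq_sum_card_fiberwise hmaps]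
  refine sum_le_sum fun S _ => (card_le_card fun π hπ => ?_).trans (card_filter_image_eq_le S)
  simp only [mem_filter] at hπ ⊢
  exact ⟨hπ.1.1, hπ.2⟩

theorem indepCount_eq_card_cliqueFinset (H : SimpleGraph V) [DecidableRel H.Adj] (i : ℕ) :
    indepCount H i = #(Hᶜ.cliqueFinset i) := by
  unfold indepCount cliqueCount
  congr!

theorem card_filter_image_isIndepSet_le [Nonempty K] (H : SimpleGraph V) [DecidableRel H.Adj] :
    #{π : K → V | ∀ a ∈ univ.image π, ∀ b ∈ univ.image π, ¬H.Adj a b} ≤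
      ∑ i ∈ Icc 1 (Fintype.card K), indepCount H i * i ^ Fintype.card K := by
  set A : Finset (K → V) := {π : K → V | ∀ a ∈ univ.image π, ∀ b ∈ univ.image π, ¬H.Adj a b}
  have himage_card : ∀ π ∈ A, #(univ.image π) ∈ Icc 1 (Fintype.card K) := fun π _ =>
    mem_Icc.2 ⟨card_pos.2 (univ_nonempty.image π), card_image_le⟩
  rw [card_eq_sum_card_fiberwise himage_card]
  refine sum_le_sum fun i _ => ?_
  calc #{π ∈ A | #(univ.image π) = i} ≤ #{π : K → V | univ.image π ∈ Hᶜ.cliqueFinset i} := by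
        refine card_le_card fun π hπ => ?_
        simp only [A, mem_filter, mem_univ, true_and] at hπ ⊢
        refine SimpleGraph.mem_cliqueFinset_iff.2 ⟨fun a ha b hb hab => ?_, hπ.2⟩
        exact (SimpleGraph.compl_adj H a b).2 ⟨hab, hπ.1 a ha b hb⟩
    _ ≤ ∑ S ∈ Hᶜ.cliqueFinset i, #S ^ Fintype.card K := card_filter_image_mem_le _
    _ = indepCount H i * i ^ Fintype.card K := by
        rw [sum_congr rfl fun S hS => by rw [(SimpleGraph.mem_cliqueFinset_iff.1 hS).card_eq],
          sum_const, smul_eq_mul, indepCount_eq_card_cliqueFinset]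

theorem card_filter_image_isIndepSet_div_le [Nonempty K] (H : SimpleGraph V)
    [DecidableRel H.Adj] :
    (#{π : K → V | ∀ a ∈ univ.image π, ∀ b ∈ univ.image π, ¬H.Adj a b} : ℝ) /
        (Fintype.card V : ℝ) ^ Fintype.card K ≤
      ∑ i ∈ Icc 1 (Fintype.card K),
        (indepCount H i : ℝ) * ((i : ℝ) / Fintype.card V) ^ Fintype.card K := by
  rcases (Nat.cast_nonneg (α := ℝ) (Fintype.card V)).eq_or_lt with hV | hV
  · -- junk value: division by `0 ^ card K = 0`
    rw [← hV, zero_pow Fintype.card_ne_zero, div_zero]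
    positivity
  rw [div_le_iff₀ (by positivity), sum_mul]
  calc _ ≤ ((∑ i ∈ Icc 1 (Fintype.card K), indepCount H i * i ^ Fintype.card K : ℕ) : ℝ) :=
        Nat.cast_le.2 (card_filter_image_isIndepSet_le H)
    _ = _ := by
        push_cast
        refine sum_congr rfl fun i _ => ?_
        rw [div_pow]
        field_simp

end Counting

theorem sum_Icc_pow_mul_div_pow_le {Q : ℝ} (hQ : 1 ≤ Q) {s t : ℕ} (hst : s ≤ t) {n : ℝ}
    (hn : 0 ≤ n) :
    ∑ i ∈ Icc s t, Q ^ i * ((i : ℝ) / n) ^ t ≤ 2 * Q ^ t * ((t : ℝ) / n) ^ t := by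
  have hQ0 : 0 ≤ Q := zero_le_one.trans hQ
  rw [mul_assoc]
  refine sum_Icc_le_two_mul_of_two_mul_le hst (by positivity) fun i _ hit => ?_
  calc 2 * (Q ^ i * ((i : ℝ) / n) ^ t) = Q ^ i * (2 * ((i : ℝ) / n) ^ t) := by ring
    _ ≤ Q ^ (i + 1) * (((i + 1 : ℕ) : ℝ) / n) ^ t := by
        push_cast
        gcongr
        · omega
        · exact two_mul_div_pow_le_add_one_div_pow hit hn

theorem sum_Icc_choose_mul_div_pow_le {m t n : ℕ} (hmt : m ≤ t) (hmn : 2 * m ≤ n) :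
    ∑ i ∈ Icc 1 m, (n.choose i : ℝ) * ((i : ℝ) / n) ^ t ≤
      2 * (n : ℝ) ^ m * ((t : ℝ) / n) ^ t := by
  calc ∑ i ∈ Icc 1 m, (n.choose i : ℝ) * ((i : ℝ) / n) ^ t
      ≤ ∑ i ∈ Icc 0 m, (n.choose i : ℝ) * ((i : ℝ) / n) ^ t :=
        sum_le_sum_of_subset_of_nonneg (Icc_subset_Icc_left zero_le_one) fun _ _ _ => by
          positivity
    _ ≤ 2 * ((n.choose m : ℝ) * ((m : ℝ) / n) ^ t) := by
        refine sum_Icc_le_two_mul_of_two_mul_le (Nat.zero_le m) (by positivity) fun i _ him => ?_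
        have hchoose : (n.choose i : ℝ) ≤ n.choose (i + 1) := by
          exact_mod_cast Nat.choose_le_succ_of_lt_half_left (by omega)
        calc 2 * ((n.choose i : ℝ) * ((i : ℝ) / n) ^ t)
            = (n.choose i : ℝ) * (2 * ((i : ℝ) / n) ^ t) := by ring
          _ ≤ (n.choose (i + 1) : ℝ) * (((i + 1 : ℕ) : ℝ) / n) ^ t := by
            push_cast
            gcongr
            exact two_mul_div_pow_le_add_one_div_pow (by omega) (Nat.cast_nonneg n)
    _ ≤ 2 * (n : ℝ) ^ m * ((t : ℝ) / n) ^ t := by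
        rw [mul_assoc]
        gcongr
        exact_mod_cast Nat.choose_le_pow n m

theorem natCast_pow_mul_div_pow_le_rpow {m t n : ℕ} (h8 : 8 * m ≤ t) (hn : 1 ≤ n) :
    (n : ℝ) ^ m * ((t : ℝ) / n) ^ t ≤ (n : ℝ) ^ (-(7 * (t : ℝ) / 8)) * (t : ℝ) ^ t := by
  have hn' : (1 : ℝ) ≤ n := by exact_mod_cast hn
  have h8' : 8 * (m : ℝ) ≤ t := by exact_mod_cast h8
  calc (n : ℝ) ^ m * ((t : ℝ) / n) ^ t = (n : ℝ) ^ ((m : ℝ) - t) * (t : ℝ) ^ t := by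
        rw [Real.rpow_sub (by positivity), Real.rpow_natCast, Real.rpow_natCast, div_pow]
        ring
    _ ≤ (n : ℝ) ^ (-(7 * (t : ℝ) / 8)) * (t : ℝ) ^ t := by
        gcongr
        linarith

theorem stmt17_general {K V : Type*} [Fintype K] [DecidableEq K] [Fintype V] [DecidableEq V]
    (H : SimpleGraph V) [DecidableRel H.Adj] (t n : ℕ) (Q : ℝ)
    (ht : Fintype.card K = t) (hn : Fintype.card V = n)
    (ht1 : 1 ≤ t) (htn : t ≤ n) (hQ1 : 1 ≤ Q)
    (hMsmall : ∀ i : ℕ, i ≤ t / 8 → indepCount H i ≤ n.choose i)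
    (hMbig : ∀ i : ℕ, t / 8 < i → i ≤ t → (indepCount H i : ℝ) ≤ Q ^ i) :
    ((univ.filter (fun π : K → V =>
        ∀ a ∈ univ.image π, ∀ b ∈ univ.image π, ¬H.Adj a b)).card : ℝ) / (n : ℝ) ^ t ≤
      (∑ i ∈ Finset.Icc 1 (t / 8), (n.choose i : ℝ) * ((i : ℝ) / n) ^ t) +
        ∑ i ∈ Finset.Icc (t / 8 + 1) t, Q ^ i * ((i : ℝ) / n) ^ t ∧
    (∑ i ∈ Finset.Icc 1 (t / 8), (n.choose i : ℝ) * ((i : ℝ) / n) ^ t) +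
        (∑ i ∈ Finset.Icc (t / 8 + 1) t, Q ^ i * ((i : ℝ) / n) ^ t) ≤
      2 * (n : ℝ) ^ (-(7 * (t : ℝ) / 8)) * (t : ℝ) ^ t + 2 * Q ^ t * ((t : ℝ) / n) ^ t := by
  have : Nonempty K := Fintype.card_pos_iff.mp (by omega)
  have hsplit (g : ℕ → ℝ) :
      ∑ i ∈ Icc 1 t, g i = ∑ i ∈ Icc 1 (t / 8), g i + ∑ i ∈ Icc (t / 8 + 1) t, g i := by
    rw [show Icc 1 t = Icc (0 + 1) t from rfl, show Icc 1 (t / 8) = Icc (0 + 1) (t / 8) from rfl]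
    simp only [Icc_add_one_left_eq_Ioc]
    exact (sum_Ioc_consecutive g (Nat.zero_le _) (Nat.div_le_self t 8)).symm
  refine ⟨?_, add_le_add ?_ (sum_Icc_pow_mul_div_pow_le hQ1 (by omega) (Nat.cast_nonneg n))⟩
  · have hcount := card_filter_image_isIndepSet_div_le (K := K) H
    rw [ht, hn, hsplit] at hcount
    refine hcount.trans (add_le_add (sum_le_sum fun i hi => ?_) (sum_le_sum fun i hi => ?_)) <;>
      rw [mem_Icc] at hi <;> gcongr
    · exact_mod_cast hMsmall i hi.2
    · exact hMbig i (by omega) hi.2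
  · calc _ ≤ 2 * (n : ℝ) ^ (t / 8) * ((t : ℝ) / n) ^ t :=
          sum_Icc_choose_mul_div_pow_le (by omega) (by omega)
      _ ≤ _ := by
          rw [mul_assoc, mul_assoc]
          exact mul_le_mul_of_nonneg_left
            (natCast_pow_mul_div_pow_le_rpow (by omega) (by omega)) zero_le_two

/-- Suppose the number of independent sets of size `i` in the `n`-vertex graph `H` is at
most `C(n,i)` for `i ≤ t/8` (automatic) and at most `Q^i` for `t/8 < i ≤ t`, with `Q ≥ 1`.
Then the probability that a uniformly random map `π` from a `t`-set `K` to `V(H)` has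
independent image is at most
`Σ_{i=1}^{t/8} C(n,i)(i/n)^t + Σ_{i=t/8+1}^{t} Q^i (i/n)^t ≤ 2n^{-7t/8}t^t + 2Q^t(t/n)^t`. -/
theorem stmt17 {K V : Type*} [Fintype K] [DecidableEq K] [Fintype V] [DecidableEq V]
    (H : SimpleGraph V) [DecidableRel H.Adj] (t n : ℕ) (Q : ℝ)
    (ht : Fintype.card K = t) (hn : Fintype.card V = n)
    (ht1 : 1 ≤ t) (htn : t ≤ n) (hQ1 : 1 ≤ Q) (hQn : Q * t ≤ n)
    (hMsmall : ∀ i : ℕ, i ≤ t / 8 → indepCount H i ≤ n.choose i)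
    (hMbig : ∀ i : ℕ, t / 8 < i → i ≤ t → (indepCount H i : ℝ) ≤ Q ^ i) :
    ((univ.filter (fun π : K → V =>
        ∀ a ∈ univ.image π, ∀ b ∈ univ.image π, ¬H.Adj a b)).card : ℝ) / (n : ℝ) ^ t ≤
      (∑ i ∈ Finset.Icc 1 (t / 8), (n.choose i : ℝ) * ((i : ℝ) / n) ^ t) +
        ∑ i ∈ Finset.Icc (t / 8 + 1) t, Q ^ i * ((i : ℝ) / n) ^ t ∧
    (∑ i ∈ Finset.Icc 1 (t / 8), (n.choose i : ℝ) * ((i : ℝ) / n) ^ t) +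
        (∑ i ∈ Finset.Icc (t / 8 + 1) t, Q ^ i * ((i : ℝ) / n) ^ t) ≤
      2 * (n : ℝ) ^ (-(7 * (t : ℝ) / 8)) * (t : ℝ) ^ t + 2 * Q ^ t * ((t : ℝ) / n) ^ t :=
  stmt17_general H t n Q ht hn ht1 htn hQ1 hMsmall hMbig
end
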